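/- arXiv:1910.03309 — 2 statements merged into one kernel-verified Lean document; each statement's English description precedes it below -/
import Mathlib

section
/- With K skew-symmetric, λ = K·L, A = K·Bᵀ·D as in the QPP setup, the vector field F_i(x) = x_i(λ_i + Σ_j A_{ij} Π_k x_k^{B_{jk}}) equals J(x)·∇H(x), where J_{ij}(x) = K_{ij} x_i x_j and H(x) = Σ_i D_{ii} Π_k x_k^{B_{ik}} + Σ_j L_j ln x_j, for every x in the positive orthant. -/
open Real Finset Matrix

/-! Along each coordinate direction the monomials `∏ k, x k ^ B i k` and the logarithms in `H`
have logarithmic derivatives that are linear in the exponents: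
`x j * ∂ⱼ H x = (Bᵀ *ᵥ (d * P)) j + L j` with `P l = ∏ k, x k ^ B l k`. Hence
`∑ j, K i j * x i * x j * ∂ⱼ H x = x i * (K *ᵥ (Bᵀ *ᵥ (d * P) + L)) i`, which is
`x i * (lam i + (A *ᵥ P) i)` because `A = K * Bᵀ * diagonal d` and `lam = K *ᵥ L`. -/

section

variable {ι : Type*} [Fintype ι]

theorem hasFDerivAt_sum_mul_log (c : ι → ℝ) {x : ι → ℝ} (hx : ∀ k, x k ≠ 0) :
    HasFDerivAt (fun y : ι → ℝ => ∑ k, c k * log (y k))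
      (∑ k, (c k / x k) • ContinuousLinearMap.proj (R := ℝ) (φ := fun _ : ι => ℝ) k) x := by
  refine (HasFDerivAt.fun_sum (u := Finset.univ) fun k _ =>
    ((hasFDerivAt_apply k x).log (hx k)).const_mul (c k)).congr_fderiv
    (Finset.sum_congr rfl fun k _ => ?_)
  rw [smul_smul, div_eq_mul_inv]

variable [DecidableEq ι]

theorem sum_smul_proj_apply_single (c : ι → ℝ) (j : ι) :
    (∑ k, c k • ContinuousLinearMap.proj k : (ι → ℝ) →L[ℝ] ℝ) (Pi.single j 1) = c j := by
  simp [Pi.single_apply]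

theorem hasFDerivAt_prod_rpow (b : ι → ℝ) {x : ι → ℝ} (hx : ∀ k, x k ≠ 0) :
    HasFDerivAt (fun y : ι → ℝ => ∏ k, y k ^ b k)
      (∑ k, (b k * (∏ i, x i ^ b i) / x k) •
        ContinuousLinearMap.proj (R := ℝ) (φ := fun _ : ι => ℝ) k) x := by
  have hfactor : ∀ k, HasFDerivAt (fun y : ι → ℝ => y k ^ b k)
      ((b k * x k ^ (b k - 1)) • ContinuousLinearMap.proj (R := ℝ) (φ := fun _ : ι => ℝ) k) x :=
    fun k => (hasFDerivAt_apply k x).rpow_const (Or.inl (hx k))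
  refine (HasFDerivAt.finsetProd fun k _ => hfactor k).congr_fderiv
    (Finset.sum_congr rfl fun k _ => ?_)
  rw [smul_smul, ← Finset.mul_prod_erase _ _ (Finset.mem_univ k), rpow_sub_one (hx k)]
  congr 1
  field_simp

theorem mul_fderiv_sum_prod_rpow_add_sum_mul_log_single {κ : Type*} [Fintype κ]
    (d : κ → ℝ) (B : Matrix κ ι ℝ) (L : ι → ℝ) {x : ι → ℝ} (hx : ∀ k, x k ≠ 0) (j : ι) :
    x j * fderiv ℝ (fun y : ι → ℝ => (∑ i, d i * ∏ k, y k ^ B i k) + ∑ k, L k * log (y k)) x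
      (Pi.single j 1) = (∑ i, B i j * (d i * ∏ k, x k ^ B i k)) + L j := by
  have hH := (HasFDerivAt.fun_sum (u := Finset.univ) fun i _ =>
    (hasFDerivAt_prod_rpow (B i) hx).const_mul (d i)).fun_add (hasFDerivAt_sum_mul_log L hx)
  rw [hH.fderiv, _root_.add_apply, _root_.sum_apply, sum_smul_proj_apply_single]
  simp only [_root_.smul_apply, sum_smul_proj_apply_single, smul_eq_mul, mul_add, Finset.mul_sum]
  congr 1
  · exact Finset.sum_congr rfl fun i _ => by field_simp [hx j]
  · field_simp [hx j]

end

theorem qpp_vector_field_is_poisson_general (n m : ℕ)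
    (K : Matrix (Fin n) (Fin n) ℝ)
    (d : Fin m → ℝ)
    (B : Matrix (Fin m) (Fin n) ℝ)
    (L : Fin n → ℝ)
    (lam : Fin n → ℝ) (hlam : lam = K.mulVec L)
    (A : Matrix (Fin n) (Fin m) ℝ) (hA : A = K * Bᵀ * Matrix.diagonal d)
    (H : (Fin n → ℝ) → ℝ)
    (hH : H = fun x => (∑ i : Fin m, d i * ∏ k : Fin n, x k ^ B i k)
        + ∑ j : Fin n, L j * Real.log (x j))
    (F : (Fin n → ℝ) → (Fin n → ℝ))
    (hF : F = fun x i => x i * (lam i + ∑ j : Fin m, A i j * ∏ k : Fin n, x k ^ B j k)) :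
    ∀ x : Fin n → ℝ, (∀ i, 0 < x i) → ∀ i : Fin n,
      F x i = ∑ j : Fin n, (K i j * x i * x j) * fderiv ℝ H x (Pi.single j 1) := by
  intro x hx i
  set P : Fin m → ℝ := fun l => ∏ k, x k ^ B l k
  calc F x i = x i * ((K *ᵥ L) i + ((K * Bᵀ * diagonal d) *ᵥ P) i) := by
        subst hF hlam hA
        rfl
    _ = x i * (K *ᵥ (Bᵀ *ᵥ (d * P) + L)) i := by
        rw [mulVec_add, add_comm (K *ᵥ _), ← mulVec_mulVec, ← mulVec_mulVec,
          show diagonal d *ᵥ P = d * P from funext (mulVec_diagonal d P)]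
        rfl
    _ = ∑ j, K i j * x i * ((∑ l, B l j * (d l * P l)) + L j) := by
        simp only [mulVec, dotProduct, Pi.add_apply, Pi.mul_apply, transpose_apply, Finset.mul_sum]
        exact Finset.sum_congr rfl fun j _ => by ring
    _ = ∑ j, (K i j * x i * x j) * fderiv ℝ H x (Pi.single j 1) := by
        refine Finset.sum_congr rfl fun j _ => ?_
        rw [hH, mul_assoc _ (x j), mul_fderiv_sum_prod_rpow_add_sum_mul_log_single d B L
          (fun k => (hx k).ne') j]

theorem qpp_vector_field_is_poisson (n m : ℕ)
    (K : Matrix (Fin n) (Fin n) ℝ) (hK : Kᵀ = -K)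
    (d : Fin m → ℝ) (hd : ∀ i, d i ≠ 0)
    (B : Matrix (Fin m) (Fin n) ℝ) (hB : B.rank = n)
    (L : Fin n → ℝ)
    (lam : Fin n → ℝ) (hlam : lam = K.mulVec L)
    (A : Matrix (Fin n) (Fin m) ℝ) (hA : A = K * Bᵀ * Matrix.diagonal d)
    (H : (Fin n → ℝ) → ℝ)
    (hH : H = fun x => (∑ i : Fin m, d i * ∏ k : Fin n, x k ^ B i k)
        + ∑ j : Fin n, L j * Real.log (x j))
    (F : (Fin n → ℝ) → (Fin n → ℝ))
    (hF : F = fun x i => x i * (lam i + ∑ j : Fin m, A i j * ∏ k : Fin n, x k ^ B j k)) :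
    ∀ x : Fin n → ℝ, (∀ i, 0 < x i) → ∀ i : Fin n,
      F x i = ∑ j : Fin n, (K i j * x i * x j) * fderiv ℝ H x (Pi.single j 1) :=
  qpp_vector_field_is_poisson_general n m K d B L lam hlam A hA H hH F hF
end

section
/- Let x₀* in the positive orthant be a fixed point of the conservative Lotka-Volterra system ẋ = diag(x)·(λ + K·D·x), λ = K·L, with K skew-symmetric, D diagonal invertible. For any N₀ ∈ ker(K) with x₀* = -D⁻¹(L - N₀), the function H_C(x) = Σ_j(D_{jj} x_j + (L_j - N₀_j) ln x_j) is constant along trajectories: its derivative along the vector field vanishes identically on the positive orthant. -/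
open Real Finset Matrix

/-!
Writing `y := D x + L - N₀`, the flow is `Fᵢ(x) = xᵢ (K y)ᵢ` because `K N₀ = 0`, while the partial
derivatives of `H_C` satisfy `xᵢ ∂ᵢH_C(x) = yᵢ`. The derivative of `H_C` along the flow is therefore
the quadratic form `y ⬝ K y`, which vanishes since `K` is skew-symmetric.
-/

theorem Matrix.dotProduct_mulVec_self_eq_zero_of_transpose_eq_neg {n R : Type*} [Fintype n]
    [CommRing R] [NoZeroDivisors R] [CharZero R] {K : Matrix n n R} (hK : Kᵀ = -K) (y : n → R) :
    y ⬝ᵥ K *ᵥ y = 0 := by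
  rw [← CharZero.eq_neg_self_iff]
  calc y ⬝ᵥ K *ᵥ y = y ⬝ᵥ Kᵀ *ᵥ y := by
        rw [dotProduct_mulVec, ← mulVec_transpose, dotProduct_comm]
    _ = -(y ⬝ᵥ K *ᵥ y) := by rw [hK, neg_mulVec, dotProduct_neg]

theorem Matrix.mulVec_add_mul_diagonal_mulVec {n R : Type*} [Fintype n] [DecidableEq n]
    [CommRing R] (K : Matrix n n R) (d L N₀ x : n → R) (hN₀ : K *ᵥ N₀ = 0) :
    K *ᵥ L + (K * diagonal d) *ᵥ x = K *ᵥ (diagonal d *ᵥ x + L - N₀) := by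
  rw [← mulVec_mulVec, mulVec_sub, mulVec_add, hN₀, sub_zero, add_comm]

theorem fderiv_sum_comp_apply_single {𝕜 ι : Type*} [NontriviallyNormedField 𝕜] [Fintype ι]
    [DecidableEq ι] {g : ι → 𝕜 → 𝕜} {x : ι → 𝕜} (hg : ∀ j, DifferentiableAt 𝕜 (g j) (x j))
    (i : ι) :
    fderiv 𝕜 (fun y : ι → 𝕜 => ∑ j, g j (y j)) x (Pi.single i 1) = deriv (g i) (x i) := by
  have hcomp : ∀ j, HasFDerivAt (fun y : ι → 𝕜 => g j (y j))
      (deriv (g j) (x j) • (ContinuousLinearMap.proj j : (ι → 𝕜) →L[𝕜] 𝕜)) x := fun j =>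
    (hg j).hasDerivAt.comp_hasFDerivAt x (hasFDerivAt_apply j x)
  rw [(HasFDerivAt.fun_sum fun j _ => hcomp j).fderiv]
  simp [Pi.single_apply]

theorem mul_deriv_affine_add_mul_log {a c t : ℝ} (ht : t ≠ 0) :
    t * deriv (fun s => a * s + c * log s) t = a * t + c := by
  have h : HasDerivAt (fun s => a * s + c * log s) (a * 1 + c * t⁻¹) t :=
    ((hasDerivAt_id t).const_mul a).add ((hasDerivAt_log ht).const_mul c)
  rw [h.deriv]
  field_simp

theorem energy_casimir_constant_along_flow_general (m : ℕ)
    (K : Matrix (Fin m) (Fin m) ℝ) (hK : Kᵀ = -K)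
    (d : Fin m → ℝ)
    (L : Fin m → ℝ)
    (lam : Fin m → ℝ) (hlam : lam = K.mulVec L)
    (F : (Fin m → ℝ) → (Fin m → ℝ))
    (hF : F = fun x i => x i * (lam i + ((K * Matrix.diagonal d).mulVec x) i))
    (N₀ : Fin m → ℝ) (hN₀ : K.mulVec N₀ = 0)
    (HC : (Fin m → ℝ) → ℝ)
    (hHC : HC = fun x => ∑ j : Fin m, (d j * x j + (L j - N₀ j) * Real.log (x j))) :
    ∀ x : Fin m → ℝ, (∀ i, 0 < x i) →
      ∑ i : Fin m, fderiv ℝ HC x (Pi.single i 1) * F x i = 0 := by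
  intro x hx
  set y := diagonal d *ᵥ x + L - N₀
  have hflow : ∀ i, F x i = x i * (K *ᵥ y) i := fun i => by
    rw [hF, hlam, ← K.mulVec_add_mul_diagonal_mulVec d L N₀ x hN₀]
    rfl
  have hgrad : ∀ i, x i * fderiv ℝ HC x (Pi.single i 1) = y i := fun i => by
    have hdiff : ∀ j, DifferentiableAt ℝ (fun s => d j * s + (L j - N₀ j) * log s) (x j) :=
      fun j => by fun_prop (disch := exact (hx j).ne')
    rw [hHC, fderiv_sum_comp_apply_single hdiff, mul_deriv_affine_add_mul_log (hx i).ne']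
    simp [y, mulVec_diagonal, add_sub_assoc]
  calc ∑ i, fderiv ℝ HC x (Pi.single i 1) * F x i
      = ∑ i, y i * (K *ᵥ y) i := by
        refine sum_congr rfl fun i _ => ?_
        rw [hflow, ← hgrad, mul_left_comm, mul_assoc]
    _ = 0 := K.dotProduct_mulVec_self_eq_zero_of_transpose_eq_neg hK y

theorem energy_casimir_constant_along_flow (m : ℕ)
    (K : Matrix (Fin m) (Fin m) ℝ) (hK : Kᵀ = -K)
    (d : Fin m → ℝ) (hd : ∀ i, d i ≠ 0)
    (L : Fin m → ℝ)
    (lam : Fin m → ℝ) (hlam : lam = K.mulVec L)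
    (F : (Fin m → ℝ) → (Fin m → ℝ))
    (hF : F = fun x i => x i * (lam i + ((K * Matrix.diagonal d).mulVec x) i))
    (N₀ : Fin m → ℝ) (hN₀ : K.mulVec N₀ = 0)
    (x₀ : Fin m → ℝ)
    (hx₀def : x₀ = -(Matrix.diagonal d)⁻¹.mulVec (L - N₀))
    (hx₀pos : ∀ i, 0 < x₀ i)
    (HC : (Fin m → ℝ) → ℝ)
    (hHC : HC = fun x => ∑ j : Fin m, (d j * x j + (L j - N₀ j) * Real.log (x j))) :
    ∀ x : Fin m → ℝ, (∀ i, 0 < x i) →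
      ∑ i : Fin m, fderiv ℝ HC x (Pi.single i 1) * F x i = 0 :=
  energy_casimir_constant_along_flow_general m K hK d L lam hlam F hF N₀ hN₀ HC hHC
end
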